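/- arXiv:1611.06411 — 4 statements merged into one kernel-verified Lean document; each statement's English description precedes it below -/
import Mathlib

section
/- Let N be a prime number and let L ⊆ ℤ^N be a cyclic sublattice (a ℤ-submodule invariant under the cyclic shift s) such that the quotient group ℤ^N/L is torsion-free. Then L is one of the following four submodules: (a) the zero submodule 0; (b) the diagonal {(x, x, …, x) : x ∈ ℤ}; (c) the sum-zero hyperplane {(x_1, …, x_N) ∈ ℤ^N : x_1 + ⋯ + x_N = 0}; (d) the full lattice ℤ^N. Conversely, each of these four submodules is cyclic with torsion-free quotient. -/
/-!
Identify `ℤ^N` with `ℤ[X] / (X^N - 1)`: the shift acts as multiplication by `X` and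
`e₀ = Pi.single 0 1` is a cyclic vector. If `L` contains a nonzero `a` of coordinate sum zero,
then `a` corresponds to `(X - 1) B` with `B ≠ 0` and `deg B < N - 1 = deg Φ_N`. As `Φ_N` is
irreducible over `ℚ`, clearing denominators in a Bezout identity for `Φ_N` and `B` gives
`u Φ_N + v B = m ≠ 0` in `ℤ[X]`, so `m (e₁ - e₀) ∈ L`, hence `e₁ - e₀ ∈ L` by torsion-freeness,
and `e₁ - e₀` generates the whole sum-zero hyperplane. If instead some element of `L` has
coordinate sum `s ≠ 0`, the sum of its `N` shifts is `s (1, …, 1)`, so `L` contains the diagonal.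
Since `N b = (N b - (∑ b) (1, …, 1)) + (∑ b) (1, …, 1)`, these two facts leave only four cases.
-/

open Polynomial

theorem Polynomial.exists_mul_add_mul_eq_C_of_isCoprime_map {R K : Type*} [CommRing R]
    [IsDomain R] [Field K] [Algebra R K] [IsFractionRing R K] {p q : R[X]}
    (h : IsCoprime (p.map (algebraMap R K)) (q.map (algebraMap R K))) :
    ∃ (u v : R[X]) (m : R), m ≠ 0 ∧ u * p + v * q = C m := by
  obtain ⟨U, V, hUV⟩ := h
  obtain ⟨a, ha, hU⟩ := IsLocalization.integerNormalization_spec (nonZeroDivisors R) U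
  obtain ⟨b, hb, hV⟩ := IsLocalization.integerNormalization_spec (nonZeroDivisors R) V
  refine ⟨C b * IsLocalization.integerNormalization (nonZeroDivisors R) U,
    C a * IsLocalization.integerNormalization (nonZeroDivisors R) V, a * b,
    mul_ne_zero (nonZeroDivisors.ne_zero ha) (nonZeroDivisors.ne_zero hb), ?_⟩
  apply map_injective (algebraMap R K) (IsFractionRing.injective R K)
  simp only [Polynomial.map_add, Polynomial.map_mul, Polynomial.map_C, hU, hV, Algebra.smul_def,
    Polynomial.algebraMap_apply, map_mul]
  linear_combination C (algebraMap R K a) * C (algebraMap R K b) * hUV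

theorem Module.End.aeval_apply_mem {R M : Type*} [CommSemiring R] [AddCommMonoid M] [Module R M]
    {f : Module.End R M} {p : Submodule R M} (hp : ∀ x ∈ p, f x ∈ p) (q : R[X]) {x : M}
    (hx : x ∈ p) : aeval f q x ∈ p := by
  induction q using Polynomial.induction_on' with
  | add q r hq hr => simpa using p.add_mem hq hr
  | monomial n c =>
    rw [aeval_monomial, Module.End.mul_apply, Module.algebraMap_end_apply]
    exact p.smul_mem c (Module.End.pow_apply_mem_of_forall_mem n hp x hx)

theorem Submodule.isAddTorsionFree_quotient_iff {M : Type*} [AddCommGroup M]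
    (L : Submodule ℤ M) :
    IsAddTorsionFree (M ⧸ L) ↔ ∀ (n : ℤ) (a : M), n ≠ 0 → n • a ∈ L → a ∈ L := by
  rw [← Module.isTorsionFree_int_iff_isAddTorsionFree, Module.isTorsionFree_iff_smul_eq_zero]
  refine ⟨fun h n a hn hna => ?_, fun h n g hng => ?_⟩
  · rw [← Submodule.Quotient.mk_eq_zero, Submodule.Quotient.mk_smul] at hna
    simpa [hn, Submodule.Quotient.mk_eq_zero] using h n _ hna
  · obtain ⟨a, rfl⟩ := Submodule.Quotient.mk_surjective L g
    rw [← Submodule.Quotient.mk_smul, Submodule.Quotient.mk_eq_zero] at hng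
    rw [or_iff_not_imp_left, Submodule.Quotient.mk_eq_zero]
    exact fun hn => h n a hn hng

theorem Submodule.mem_of_zsmul_mem {M : Type*} [AddCommGroup M] {L : Submodule ℤ M}
    [IsAddTorsionFree (M ⧸ L)] {n : ℤ} {a : M} (hn : n ≠ 0) (h : n • a ∈ L) : a ∈ L :=
  (isAddTorsionFree_quotient_iff L).mp ‹_› n a hn h

namespace CyclicLattice

open Fin.NatCast

variable {N : ℕ}

def sumZero (N : ℕ) : Submodule ℤ (Fin N → ℤ) where
  carrier := {a | ∑ i, a i = 0}
  add_mem' ha hb := by simp_all [Finset.sum_add_distrib]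
  zero_mem' := by simp
  smul_mem' c a ha := by simp_all [← Finset.mul_sum]

lemma mem_sumZero {a : Fin N → ℤ} : a ∈ sumZero N ↔ ∑ i, a i = 0 := Iff.rfl

lemma coe_sumZero : (sumZero N : Set (Fin N → ℤ)) = {a | ∑ i, a i = 0} := rfl

def diagonal (N : ℕ) : Submodule ℤ (Fin N → ℤ) := ℤ ∙ 1

lemma one_mem_diagonal : (1 : Fin N → ℤ) ∈ diagonal N := Submodule.mem_span_singleton_self 1

lemma mem_diagonal {a : Fin N → ℤ} : a ∈ diagonal N ↔ ∃ x : ℤ, a = fun _ => x := by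
  simp [diagonal, Submodule.mem_span_singleton, funext_iff, eq_comm]

lemma coe_diagonal : (diagonal N : Set (Fin N → ℤ)) = {a | ∃ x : ℤ, a = fun _ => x} :=
  Set.ext fun _ => mem_diagonal

lemma card_smul_sub_sum_smul_one_mem_sumZero (b : Fin N → ℤ) :
    (N : ℤ) • b - (∑ i, b i) • 1 ∈ sumZero N := by
  simp [mem_sumZero, Finset.sum_sub_distrib, ← Finset.mul_sum]

lemma isAddTorsionFree_quotient_sumZero : IsAddTorsionFree ((Fin N → ℤ) ⧸ sumZero N) := by
  rw [Submodule.isAddTorsionFree_quotient_iff]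
  intro n a hn hna
  rw [mem_sumZero] at hna ⊢
  simpa [← Finset.mul_sum, hn] using hna

noncomputable def toPoly (a : Fin N → ℤ) : ℤ[X] := ∑ i, C (a i) * X ^ (i : ℕ)

lemma degree_toPoly_lt (a : Fin N → ℤ) : (toPoly a).degree < N :=
  (degree_sum_fin_lt a).trans_eq rfl

lemma eval_one_toPoly (a : Fin N → ℤ) : (toPoly a).eval 1 = ∑ i, a i := by
  simp [toPoly, eval_finsetSum]

variable [NeZero N]

lemma isAddTorsionFree_quotient_diagonal : IsAddTorsionFree ((Fin N → ℤ) ⧸ diagonal N) := by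
  rw [Submodule.isAddTorsionFree_quotient_iff]
  intro n a hn hna
  obtain ⟨x, hx⟩ := mem_diagonal.mp hna
  refine mem_diagonal.mpr ⟨a 0, funext fun i => mul_left_cancel₀ hn ?_⟩
  simpa using (congrFun hx i).trans (congrFun hx 0).symm

lemma le_diagonal_of_disjoint {L : Submodule ℤ (Fin N → ℤ)} (hD : diagonal N ≤ L)
    (h : Disjoint L (sumZero N)) : L ≤ diagonal N := by
  intro b hb
  have hzero := Submodule.disjoint_def.mp h _
    (L.sub_mem (L.smul_mem _ hb) (L.smul_mem _ (hD one_mem_diagonal)))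
    (card_smul_sub_sum_smul_one_mem_sumZero b)
  have hN : (N : ℤ) ≠ 0 := by exact_mod_cast NeZero.ne N
  refine mem_diagonal.mpr ⟨b 0, funext fun i => mul_left_cancel₀ hN ?_⟩
  have hb := congrFun (sub_eq_zero.mp hzero)
  simpa using (hb i).trans (hb 0).symm

lemma eq_top_of_diagonal_le_of_sumZero_le {L : Submodule ℤ (Fin N → ℤ)}
    [IsAddTorsionFree ((Fin N → ℤ) ⧸ L)] (hD : diagonal N ≤ L) (hS : sumZero N ≤ L) :
    L = ⊤ := by
  refine Submodule.eq_top_iff'.mpr fun b => L.mem_of_zsmul_mem (n := N)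
    (by exact_mod_cast NeZero.ne N) ?_
  have hsum := L.add_mem (hS (card_smul_sub_sum_smul_one_mem_sumZero b))
    (hD (Submodule.smul_mem _ (∑ i, b i) one_mem_diagonal))
  simpa using hsum

def shift : Module.End ℤ (Fin N → ℤ) := LinearMap.funLeft ℤ ℤ (· - 1)

lemma shift_apply (a : Fin N → ℤ) (i : Fin N) : shift a i = a (i - 1) := rfl

lemma shift_eq_mod (a : Fin N → ℤ) :
    shift a = fun i : Fin N => a ⟨((i : ℕ) + (N - 1)) % N, Nat.mod_lt _ (NeZero.pos N)⟩ := by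
  funext i
  rw [shift_apply]
  congr 1
  ext
  rw [Fin.sub_def, Fin.val_one']
  rcases (NeZero.one_le : 1 ≤ N).eq_or_lt with rfl | h
  · simp
  · rw [Nat.mod_eq_of_lt h, Nat.add_comm]

lemma shift_pow_apply (k : ℕ) (a : Fin N → ℤ) (i : Fin N) : (shift ^ k) a i = a (i - k) := by
  induction k generalizing a with
  | zero => simp
  | succ k ih => rw [pow_succ, Module.End.mul_apply, ih, shift_apply]; congr 1; push_cast; abel

lemma shift_pow_single (k : ℕ) (j : Fin N) :
    (shift ^ k) (Pi.single j 1) = Pi.single (j + k) (1 : ℤ) := by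
  funext i
  simp [shift_pow_apply, Pi.single_apply, sub_eq_iff_eq_add]

lemma shift_pow_card : (shift : Module.End ℤ (Fin N → ℤ)) ^ N = 1 := by
  ext a i
  simp [shift_pow_apply]

lemma sum_shift_apply (a : Fin N → ℤ) : ∑ i, shift a i = ∑ i, a i :=
  Equiv.sum_comp (Equiv.subRight 1) a

lemma sum_shift_pow_apply (c : Fin N → ℤ) :
    ∑ k ∈ Finset.range N, (shift ^ k) c = (∑ i, c i) • 1 := by
  funext i
  simp only [Finset.sum_apply, shift_pow_apply, ← Fin.sum_univ_eq_sum_range (fun k => c (i - k)),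
    Fin.cast_val_eq_self, Pi.smul_apply, smul_eq_mul, Pi.one_apply, mul_one]
  exact Equiv.sum_comp (Equiv.subLeft i) c

lemma aeval_toPoly (a : Fin N → ℤ) : aeval shift (toPoly a) (Pi.single 0 1) = a := by
  conv_rhs => rw [← Finset.univ_sum_single a]
  simp only [toPoly, map_sum, LinearMap.sum_apply]
  refine Finset.sum_congr rfl fun i _ => ?_
  ext j
  simp [shift_pow_single, Pi.single_apply]

lemma exists_aeval_shift_sub_single_eq {b : Fin N → ℤ} (hb : b ∈ sumZero N) :
    ∃ B : ℤ[X], aeval shift B (shift (Pi.single 0 1) - Pi.single 0 1) = b := by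
  obtain ⟨B, hB⟩ : X - C 1 ∣ toPoly b :=
    dvd_iff_isRoot.mpr (by rwa [IsRoot, eval_one_toPoly])
  refine ⟨B, ?_⟩
  conv_rhs => rw [← aeval_toPoly b, hB, mul_comm]
  simp

lemma exists_aeval_shift_eq_smul {a : Fin N → ℤ} (hN : N.Prime) (ha0 : a ≠ 0)
    (ha : a ∈ sumZero N) : ∃ (v : ℤ[X]) (m : ℤ), m ≠ 0 ∧
      aeval shift v a = m • (shift (Pi.single 0 1) - Pi.single 0 1) := by
  have : Fact N.Prime := ⟨hN⟩
  obtain ⟨B, hB⟩ : X - C 1 ∣ toPoly a :=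
    dvd_iff_isRoot.mpr (by rwa [IsRoot, eval_one_toPoly])
  have hB0 : B ≠ 0 := by
    rintro rfl
    rw [mul_zero] at hB
    exact ha0 (by rw [← aeval_toPoly a, hB, map_zero, LinearMap.zero_apply])
  have hdeg : B.degree < N.totient := by
    have h := degree_toPoly_lt a
    rw [hB, degree_mul, degree_X_sub_C, degree_eq_natDegree hB0] at h
    rw [degree_eq_natDegree hB0, Nat.totient_prime hN]
    have : 1 + B.natDegree < N := by exact_mod_cast h
    exact_mod_cast (by omega : B.natDegree < N - 1)
  have hcop : IsCoprime ((cyclotomic N ℤ).map (algebraMap ℤ ℚ)) (B.map (algebraMap ℤ ℚ)) := by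
    rw [algebraMap_int_eq, map_cyclotomic_int,
      (cyclotomic.irreducible_rat hN.pos).coprime_iff_not_dvd]
    refine Monic.not_dvd_of_degree_lt (cyclotomic.monic N ℚ) ?_ ?_
    · exact (Polynomial.map_ne_zero_iff (Int.castRingHom ℚ).injective_int).mpr hB0
    · rwa [degree_cyclotomic, degree_map_eq_of_injective (Int.castRingHom ℚ).injective_int]
  obtain ⟨u, v, m, hm, huv⟩ := exists_mul_add_mul_eq_C_of_isCoprime_map hcop
  refine ⟨v, m, hm, ?_⟩
  have key : u * (X ^ N - 1) + v * toPoly a = C m * (X - C 1) := by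
    rw [hB, ← cyclotomic_prime_mul_X_sub_one ℤ N, ← C_1]
    linear_combination (X - C 1) * huv
  have := congrArg (fun p => aeval shift p (Pi.single (0 : Fin N) 1)) key
  simpa [shift_pow_card, aeval_toPoly, zsmul_eq_mul] using this

variable {L : Submodule ℤ (Fin N → ℤ)}

lemma sumZero_le_of_mem (hN : N.Prime) (hL : ∀ a ∈ L, shift a ∈ L)
    [IsAddTorsionFree ((Fin N → ℤ) ⧸ L)] {a : Fin N → ℤ} (haL : a ∈ L) (ha0 : a ≠ 0)
    (ha : a ∈ sumZero N) : sumZero N ≤ L := by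
  obtain ⟨v, m, hm, hv⟩ := exists_aeval_shift_eq_smul hN ha0 ha
  have hgen : shift (Pi.single 0 1) - Pi.single 0 1 ∈ L :=
    L.mem_of_zsmul_mem hm (hv ▸ Module.End.aeval_apply_mem hL v haL)
  intro b hb
  obtain ⟨B, rfl⟩ := exists_aeval_shift_sub_single_eq hb
  exact Module.End.aeval_apply_mem hL B hgen

lemma diagonal_le_of_sum_ne_zero (hL : ∀ a ∈ L, shift a ∈ L)
    [IsAddTorsionFree ((Fin N → ℤ) ⧸ L)] {c : Fin N → ℤ} (hcL : c ∈ L) (hc : ∑ i, c i ≠ 0) :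
    diagonal N ≤ L := by
  rw [diagonal, Submodule.span_singleton_le_iff_mem]
  refine L.mem_of_zsmul_mem hc ?_
  rw [← sum_shift_pow_apply]
  exact L.sum_mem fun k _ => Module.End.pow_apply_mem_of_forall_mem k hL c hcL

theorem eq_bot_or_diagonal_or_sumZero_or_top (hN : N.Prime) (hL : ∀ a ∈ L, shift a ∈ L)
    [IsAddTorsionFree ((Fin N → ℤ) ⧸ L)] :
    L = ⊥ ∨ L = diagonal N ∨ L = sumZero N ∨ L = ⊤ := by
  by_cases hLS : L ≤ sumZero N
  · by_cases hbot : L = ⊥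
    · exact Or.inl hbot
    obtain ⟨a, haL, ha0⟩ := L.ne_bot_iff.mp hbot
    exact Or.inr (Or.inr (Or.inl (le_antisymm hLS (sumZero_le_of_mem hN hL haL ha0 (hLS haL)))))
  obtain ⟨c, hcL, hc⟩ := SetLike.not_le_iff_exists.mp hLS
  have hD := diagonal_le_of_sum_ne_zero hL hcL hc
  by_cases hdisj : Disjoint L (sumZero N)
  · exact Or.inr (Or.inl (le_antisymm (le_diagonal_of_disjoint hD hdisj) hD))
  simp only [Submodule.disjoint_def, not_forall] at hdisj
  obtain ⟨a, haL, ha, ha0⟩ := hdisj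
  exact Or.inr (Or.inr (Or.inr
    (eq_top_of_diagonal_le_of_sumZero_le hD (sumZero_le_of_mem hN hL haL ha0 ha))))

lemma shift_mem_and_isAddTorsionFree_quotient
    (h : L = ⊥ ∨ L = diagonal N ∨ L = sumZero N ∨ L = ⊤) :
    (∀ a ∈ L, shift a ∈ L) ∧ IsAddTorsionFree ((Fin N → ℤ) ⧸ L) := by
  rcases h with rfl | rfl | rfl | rfl
  · refine ⟨fun a ha => by simp_all, (Submodule.isAddTorsionFree_quotient_iff ⊥).mpr ?_⟩
    intro n a hn hna
    rw [Submodule.mem_bot] at hna ⊢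
    exact (smul_eq_zero.mp hna).resolve_left hn
  · refine ⟨fun a ha => ?_, isAddTorsionFree_quotient_diagonal⟩
    obtain ⟨x, rfl⟩ := mem_diagonal.mp ha
    exact mem_diagonal.mpr ⟨x, rfl⟩
  · exact ⟨fun a ha => (sum_shift_apply a).trans ha, isAddTorsionFree_quotient_sumZero⟩
  · exact ⟨fun _ _ => Submodule.mem_top,
      (Submodule.isAddTorsionFree_quotient_iff ⊤).mpr fun _ _ _ _ => Submodule.mem_top⟩

end CyclicLattice

open CyclicLattice in
/-- Let `N` be a prime and `L ⊆ ℤ^N` a cyclic sublattice (a `ℤ`-submodule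
invariant under the cyclic shift `s`, where `(s a) i = a ((i + (N-1)) % N)`) such that the
quotient group `ℤ^N/L` is torsion-free. Then `L` is one of: the zero submodule, the diagonal,
the sum-zero hyperplane, or all of `ℤ^N`; and conversely each of these four is a cyclic
sublattice with torsion-free quotient. -/
theorem stmt_1 (N : ℕ) (hN : N.Prime) (L : Submodule ℤ (Fin N → ℤ)) :
    ((∀ a ∈ L, (fun i : Fin N => a ⟨((i : ℕ) + (N - 1)) % N, Nat.mod_lt _ hN.pos⟩) ∈ L) ∧
        (∀ g : (Fin N → ℤ) ⧸ L, g ≠ 0 → ¬IsOfFinAddOrder g)) ↔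
      (L = ⊥ ∨
        (L : Set (Fin N → ℤ)) = {a : Fin N → ℤ | ∃ x : ℤ, a = fun _ => x} ∨
        (L : Set (Fin N → ℤ)) = {a : Fin N → ℤ | ∑ i, a i = 0} ∨
        L = ⊤) := by
  have : NeZero N := ⟨hN.ne_zero⟩
  rw [← isAddTorsionFree_iff_not_isOfFinAddOrder, ← coe_diagonal, ← coe_sumZero,
    SetLike.coe_set_eq, SetLike.coe_set_eq]
  simp only [← shift_eq_mod]
  exact ⟨fun ⟨hL, _⟩ => eq_bot_or_diagonal_or_sumZero_or_top hN hL,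
    shift_mem_and_isAddTorsionFree_quotient⟩
end

section
/- Let N be a positive integer. The number of cyclic sublattices L of ℤ^N (ℤ-submodules invariant under the cyclic shift s) such that the quotient group ℤ^N/L is torsion-free is exactly 2^{τ(N)}, where τ(N) denotes the number of positive divisors of N. -/
/-- A torsion-free additive monoid is one whose only element of finite order is `0`
(the December 2024 Mathlib definition, since removed). -/
def AddMonoid.IsTorsionFree (G : Type*) [AddMonoid G] : Prop :=
  ∀ g : G, g ≠ 0 → ¬IsOfFinAddOrder g

/-!
A sublattice `L ⊆ ℤ^N` with torsion-free quotient is determined by the subspace `ℚL ⊆ ℚ^N`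
(it equals `ℚL ∩ ℤ^N`), and every subspace arises this way; `L` is shift-invariant iff `ℚL` is.
Letting `X` act by the shift makes `ℚ^N` a cyclic `ℚ[X]`-module generated by `e₀`, isomorphic to
`ℚ[X]/(X^N - 1)`, so invariant subspaces correspond to ideals containing `X^N - 1`, i.e. to
divisors of `X^N - 1 = ∏_{d ∣ N} Φ_d` up to units. The `Φ_d` being pairwise distinct irreducibles
over `ℚ`, these divisors are the subproducts, one for each set of divisors of `N`.
-/

open Finset Polynomial LinearMap

section PrimeProducts

variable {M ι : Type*} [CommMonoidWithZero M] [IsCancelMulZero M] {P : ι → M} {t : Finset ι}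

theorem exists_subset_associated_prod_of_dvd_prod [DecidableEq ι] {g : M}
    (hP : ∀ i ∈ t, Prime (P i)) (hg : g ∣ ∏ i ∈ t, P i) :
    ∃ S ⊆ t, Associated g (∏ i ∈ S, P i) := by
  induction t using Finset.induction_on generalizing g with
  | empty =>
    refine ⟨∅, subset_rfl, ?_⟩
    simpa [associated_one_iff_isUnit] using isUnit_of_dvd_one (by simpa using hg)
  | insert a t ha ih =>
    have hPa := hP a (mem_insert_self a t)
    have hPt : ∀ i ∈ t, Prime (P i) := fun i hi => hP i (mem_insert_of_mem hi)
    rw [prod_insert ha] at hg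
    by_cases hag : P a ∣ g
    · obtain ⟨g', rfl⟩ := hag
      obtain ⟨S, hSt, hS⟩ := ih hPt ((mul_dvd_mul_iff_left hPa.ne_zero).mp hg)
      refine ⟨insert a S, insert_subset_insert a hSt, ?_⟩
      rw [prod_insert fun haS => ha (hSt haS)]
      exact hS.mul_left (P a)
    · obtain ⟨k, hk⟩ := hg
      obtain ⟨k', rfl⟩ := (hPa.dvd_or_dvd ⟨_, hk.symm⟩).resolve_left hag
      have hgk' : ∏ i ∈ t, P i = g * k' := mul_left_cancel₀ hPa.ne_zero (by rw [hk, mul_left_comm])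
      obtain ⟨S, hSt, hS⟩ := ih hPt ⟨k', hgk'⟩
      exact ⟨S, hSt.trans (subset_insert a t), hS⟩

theorem subset_of_associated_prod_prod (hP : ∀ i ∈ t, Prime (P i))
    (hinj : ∀ i ∈ t, ∀ j ∈ t, Associated (P i) (P j) → i = j) {S₁ S₂ : Finset ι}
    (h₁ : S₁ ⊆ t) (h₂ : S₂ ⊆ t) (h : Associated (∏ i ∈ S₁, P i) (∏ i ∈ S₂, P i)) : S₁ ⊆ S₂ := by
  intro i hi
  have hPi := hP i (h₁ hi)
  obtain ⟨j, hj, hij⟩ := hPi.exists_mem_finset_dvd ((dvd_prod_of_mem P hi).trans h.dvd)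
  rwa [hinj i (h₁ hi) j (h₂ hj) (hPi.associated_of_dvd (hP j (h₂ hj)) hij)]

end PrimeProducts

section PrincipalIdealRing

variable {R ι : Type*} [CommRing R] [IsDomain R] [IsPrincipalIdealRing R] [DecidableEq ι]
  {P : ι → R} {t : Finset ι}

noncomputable def powersetEquivIdealsGeSpanProd (hP : ∀ i ∈ t, Prime (P i))
    (hinj : ∀ i ∈ t, ∀ j ∈ t, Associated (P i) (P j) → i = j) :
    t.powerset ≃ {J : Ideal R // Ideal.span {∏ i ∈ t, P i} ≤ J} := by
  refine Equiv.ofBijective (fun S => ⟨Ideal.span {∏ i ∈ S.1, P i}, ?_⟩) ⟨?_, ?_⟩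
  · rw [Ideal.span_singleton_le_span_singleton]
    exact prod_dvd_prod_of_subset _ _ _ (mem_powerset.mp S.2)
  · rintro ⟨S₁, h₁⟩ ⟨S₂, h₂⟩ h
    have h := Ideal.span_singleton_eq_span_singleton.mp (congrArg Subtype.val h)
    rw [mem_powerset] at h₁ h₂
    exact Subtype.ext <| (subset_of_associated_prod_prod hP hinj h₁ h₂ h).antisymm
      (subset_of_associated_prod_prod hP hinj h₂ h₁ h.symm)
  · rintro ⟨J, hJ⟩
    obtain ⟨g, rfl⟩ := (IsPrincipalIdealRing.principal J).principal
    obtain ⟨S, hSt, hS⟩ := exists_subset_associated_prod_of_dvd_prod hP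
      (Ideal.span_singleton_le_span_singleton.mp hJ)
    exact ⟨⟨S, mem_powerset.mpr hSt⟩,
      Subtype.ext (Ideal.span_singleton_eq_span_singleton.mpr hS.symm)⟩

theorem card_ideals_ge_span_prod (hP : ∀ i ∈ t, Prime (P i))
    (hinj : ∀ i ∈ t, ∀ j ∈ t, Associated (P i) (P j) → i = j) :
    Nat.card {J : Ideal R // Ideal.span {∏ i ∈ t, P i} ≤ J} = 2 ^ t.card := by
  rw [← Nat.card_congr (powersetEquivIdealsGeSpanProd hP hinj), Nat.card_eq_finsetCard,
    card_powerset]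

end PrincipalIdealRing

theorem card_ideals_ge_span_X_pow_sub_one {N : ℕ} (hN : 0 < N) :
    Nat.card {J : Ideal ℚ[X] // Ideal.span {X ^ N - 1} ≤ J} = 2 ^ N.divisors.card := by
  rw [← prod_cyclotomic_eq_X_pow_sub_one hN]
  exact card_ideals_ge_span_prod
    (fun d hd => (cyclotomic.irreducible_rat (Nat.pos_of_mem_divisors hd)).prime)
    fun d _ e _ h => cyclotomic_injective
      (eq_of_monic_of_associated (cyclotomic.monic d ℚ) (cyclotomic.monic e ℚ) h)

theorem isTorsionFree_quotient_iff {M : Type*} [AddCommGroup M] (L : Submodule ℤ M) :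
    AddMonoid.IsTorsionFree (M ⧸ L) ↔ ∀ (n : ℕ) (a : M), n ≠ 0 → n • a ∈ L → a ∈ L := by
  simp only [AddMonoid.IsTorsionFree, isOfFinAddOrder_iff_nsmul_eq_zero]
  constructor
  · intro h n a hn hna
    by_contra ha
    refine h (Submodule.Quotient.mk a) (mt (Submodule.Quotient.mk_eq_zero L).mp ha)
      ⟨n, Nat.pos_of_ne_zero hn, ?_⟩
    rwa [← Submodule.Quotient.mk_smul, Submodule.Quotient.mk_eq_zero]
  · rintro h g hg ⟨n, hn, hng⟩
    obtain ⟨a, rfl⟩ := Submodule.Quotient.mk_surjective L g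
    rw [← Submodule.Quotient.mk_smul, Submodule.Quotient.mk_eq_zero] at hng
    exact hg ((Submodule.Quotient.mk_eq_zero L).mpr (h n a hn.ne' hng))

theorem exists_nsmul_mem_span_int_of_mem_span_rat {V : Type*} [AddCommGroup V] [Module ℚ V]
    {S : Set V} {x : V} (hx : x ∈ Submodule.span ℚ S) :
    ∃ n : ℕ, n ≠ 0 ∧ n • x ∈ Submodule.span ℤ S := by
  induction hx using Submodule.span_induction with
  | mem y hy => exact ⟨1, one_ne_zero, by simpa using Submodule.subset_span hy⟩
  | zero => exact ⟨1, one_ne_zero, by simp⟩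
  | add y z _ _ hy hz =>
    obtain ⟨m, hm, hym⟩ := hy
    obtain ⟨k, hk, hzk⟩ := hz
    refine ⟨k * m, mul_ne_zero hk hm, ?_⟩
    rw [smul_add, mul_smul, mul_comm, mul_smul]
    exact add_mem (Submodule.smul_of_tower_mem _ k hym) (Submodule.smul_of_tower_mem _ m hzk)
  | smul q y _ hy =>
    obtain ⟨m, hm, hym⟩ := hy
    refine ⟨q.den * m, mul_ne_zero q.den_nz hm, ?_⟩
    have hclear : (q.den * m) • q • y = q.num • m • y := by
      simp only [← Nat.cast_smul_eq_nsmul ℚ, ← Int.cast_smul_eq_zsmul ℚ, smul_smul]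
      rw [Nat.cast_mul, mul_right_comm, Rat.den_mul_eq_num]
    rw [hclear]
    exact Submodule.smul_of_tower_mem _ _ hym

theorem Submodule.mem_of_nsmul_mem {V : Type*} [AddCommGroup V] [Module ℚ V]
    (W : Submodule ℚ V) {n : ℕ} (hn : n ≠ 0) {w : V} (h : n • w ∈ W) : w ∈ W := by
  rw [← Nat.cast_smul_eq_nsmul ℚ] at h
  exact (Submodule.smul_mem_iff W (Nat.cast_ne_zero.mpr hn)).mp h

section Saturation

variable {ι : Type*}

def castToRat : (ι → ℤ) →ₗ[ℤ] (ι → ℚ) := (Int.castAddHom ℚ).toIntLinearMap.compLeft ι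

theorem castToRat_injective : Function.Injective (castToRat (ι := ι)) :=
  fun _ _ h => funext fun i => Int.cast_injective (congrFun h i)

theorem exists_castToRat_eq_nsmul [Fintype ι] (w : ι → ℚ) :
    ∃ n : ℕ, n ≠ 0 ∧ ∃ a, castToRat a = n • w := by
  have hint : ∀ i, ∃ a : ℤ, (a : ℚ) = (∏ j, (w j).den) • w i := fun i => by
    obtain ⟨k, hk⟩ := dvd_prod_of_mem (fun j => (w j).den) (mem_univ i)
    refine ⟨k * (w i).num, ?_⟩
    rw [hk, nsmul_eq_mul, Nat.cast_mul, mul_right_comm, Rat.den_mul_eq_num]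
    push_cast; ring
  choose a ha using hint
  exact ⟨_, (prod_pos fun i _ => (w i).den_pos).ne', a, funext ha⟩

noncomputable def saturatedSublatticeEquiv [Fintype ι] :
    {L : Submodule ℤ (ι → ℤ) // AddMonoid.IsTorsionFree ((ι → ℤ) ⧸ L)} ≃
      Submodule ℚ (ι → ℚ) where
  toFun L := Submodule.span ℚ (castToRat '' L.1)
  invFun W := ⟨(W.restrictScalars ℤ).comap castToRat,
    (isTorsionFree_quotient_iff _).mpr fun n a hn hna =>
      Submodule.mem_comap.mpr <|
        W.mem_of_nsmul_mem hn (by rwa [Submodule.mem_comap, map_nsmul] at hna)⟩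
  left_inv L := by
    refine Subtype.ext <|
      le_antisymm (fun a ha => ?_) fun a ha => Submodule.subset_span ⟨a, ha, rfl⟩
    obtain ⟨n, hn, hna⟩ := exists_nsmul_mem_span_int_of_mem_span_rat ha
    rw [Submodule.span_image, Submodule.span_eq] at hna
    obtain ⟨b, hb, hba⟩ := hna
    rw [castToRat_injective (hba.trans (map_nsmul castToRat n a).symm)] at hb
    exact (isTorsionFree_quotient_iff L.1).mp L.2 n a hn hb
  right_inv W := by
    refine le_antisymm (Submodule.span_le.mpr ?_) fun w hw => ?_
    · rintro _ ⟨a, ha, rfl⟩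
      exact ha
    · obtain ⟨n, hn, a, ha⟩ := exists_castToRat_eq_nsmul w
      have haW : castToRat a ∈ W := ha ▸ W.smul_of_tower_mem n hw
      exact Submodule.mem_of_nsmul_mem _ hn (ha ▸ Submodule.subset_span ⟨a, haW, rfl⟩)

theorem comap_castToRat_mem_invtSubmodule_iff [Fintype ι] (σ : ι → ι)
    (W : Submodule ℚ (ι → ℚ)) :
    (W.restrictScalars ℤ).comap castToRat ∈ Module.End.invtSubmodule (funLeft ℤ ℤ σ) ↔
      W ∈ Module.End.invtSubmodule (funLeft ℚ ℚ σ) := by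
  simp only [Module.End.mem_invtSubmodule]
  refine ⟨fun h w hw => ?_, fun h a ha => h ha⟩
  obtain ⟨n, hn, a, ha⟩ := exists_castToRat_eq_nsmul w
  have hσ : castToRat (funLeft ℤ ℤ σ a) = n • funLeft ℚ ℚ σ w := by
    rw [← map_nsmul, ← ha]; rfl
  have haW : castToRat a ∈ W := ha ▸ W.smul_of_tower_mem n hw
  exact W.mem_of_nsmul_mem hn (hσ ▸ h haW)

noncomputable def invariantSaturatedSublatticeEquiv [Fintype ι] (σ : ι → ι) :
    {L : Submodule ℤ (ι → ℤ) //
        L ∈ Module.End.invtSubmodule (funLeft ℤ ℤ σ) ∧ AddMonoid.IsTorsionFree ((ι → ℤ) ⧸ L)} ≃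
      Module.End.invtSubmodule (funLeft ℚ ℚ σ) :=
  (Equiv.subtypeEquivRight fun _ => and_comm).trans <|
    (Equiv.subtypeSubtypeEquivSubtypeInter _ _).symm.trans <|
      (saturatedSublatticeEquiv.symm.subtypeEquiv fun W =>
        (comap_castToRat_mem_invtSubmodule_iff σ W).symm).symm

end Saturation

section CyclicShift

variable (K : Type*) [Field K] (N : ℕ) [NeZero N]

open Fin.NatCast

def cyclicShift : Module.End K (Fin N → K) := funLeft K K fun i => i - 1

theorem cyclicShift_pow_single_zero (k : ℕ) :
    (cyclicShift K N ^ k) (Pi.single 0 1) = Pi.single (k : Fin N) 1 := by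
  induction k with
  | zero => simp
  | succ k ih =>
    ext j
    rw [pow_succ', Module.End.mul_apply, ih]
    simp only [cyclicShift, funLeft_apply, Pi.single_apply, sub_eq_iff_eq_add, Nat.cast_succ]

noncomputable def cyclicVectorMap : K[X] →ₗ[K[X]] Module.AEval' (cyclicShift K N) :=
  toSpanSingleton K[X] _ (Module.AEval'.of _ (Pi.single 0 1))

theorem cyclicVectorMap_apply (p : K[X]) :
    cyclicVectorMap K N p =
      Module.AEval'.of _ (aeval (cyclicShift K N) p (Pi.single 0 1)) := rfl

theorem cyclicVectorMap_surjective : Function.Surjective (cyclicVectorMap K N) := by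
  intro m
  refine ⟨∑ i : Fin N, monomial i ((Module.AEval'.of _).symm m i), ?_⟩
  rw [cyclicVectorMap_apply, map_sum, LinearMap.sum_apply]
  simp only [aeval_monomial, Module.End.mul_apply, cyclicShift_pow_single_zero,
    Fin.cast_val_eq_self, Module.algebraMap_end_apply, ← Pi.single_smul', smul_eq_mul, mul_one,
    Finset.univ_sum_single, LinearEquiv.apply_symm_apply]

theorem ker_cyclicVectorMap : ker (cyclicVectorMap K N) = Ideal.span {X ^ N - 1} := by
  have hf : (X ^ N - 1 : K[X]) ∈ ker (cyclicVectorMap K N) := by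
    rw [mem_ker, cyclicVectorMap_apply, map_sub, map_pow, aeval_X, map_one, LinearMap.sub_apply,
      cyclicShift_pow_single_zero, Fin.natCast_self, Module.End.one_apply, sub_self, map_zero]
  obtain ⟨g, hg⟩ := (IsPrincipalIdealRing.principal (ker (cyclicVectorMap K N))).principal
  -- `K[X] ⧸ (g) ≅ K^N`, so `g` has degree `N`; dividing `X ^ N - 1`, it is associated to it.
  have hdeg : g.natDegree = N := by
    rw [← finrank_quotient_span_eq_natDegree, ← Ideal.submodule_span_eq, ← hg]
    have e := (quotKerEquivOfSurjective _ (cyclicVectorMap_surjective K N)).restrictScalars K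
    exact (e.trans (Module.AEval'.of _).symm).finrank_eq.trans (Module.finrank_fin_fun K)
  rw [hg] at hf ⊢
  refine Ideal.span_singleton_eq_span_singleton.mpr (associated_of_dvd_of_natDegree_le
    (Ideal.mem_span_singleton.mp hf) (X_pow_sub_C_ne_zero (NeZero.pos N) 1) ?_)
  rw [← C_1, natDegree_X_pow_sub_C, hdeg]

noncomputable def invtSubmoduleEquivIdeal :
    (cyclicShift K N).invtSubmodule ≃ {J : Ideal K[X] // Ideal.span {X ^ N - 1} ≤ J} :=
  (Module.AEval.mapSubmodule K (Fin N → K) (cyclicShift K N)).toEquiv.trans <|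
    (Submodule.orderIsoMapComap
      (quotKerEquivOfSurjective _ (cyclicVectorMap_surjective K N))).symm.toEquiv.trans <|
      (Submodule.comapMkQRelIso _).toEquiv.trans <|
        Equiv.subtypeEquivRight fun J => by rw [ker_cyclicVectorMap, Set.mem_Ici]

end CyclicShift

theorem Fin.mk_add_pred_mod_eq_sub_one {N : ℕ} [NeZero N] (i : Fin N) :
    (⟨((i : ℕ) + (N - 1)) % N, Nat.mod_lt _ (NeZero.pos N)⟩ : Fin N) = i - 1 := by
  rcases Nat.lt_or_ge 1 N with hN | hN
  · ext
    rw [Fin.val_sub, Fin.val_one', Nat.mod_eq_of_lt hN, add_comm]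
  · have : Subsingleton (Fin N) := Fin.subsingleton_iff_le_one.mpr hN
    exact Subsingleton.elim _ _

/-- For a positive integer `N`, the number of cyclic sublattices `L` of `ℤ^N`
(`ℤ`-submodules invariant under the cyclic shift `s`, where `(s a) i = a ((i + (N-1)) % N)`)
with torsion-free quotient `ℤ^N/L` is exactly `2^{τ(N)}`, where `τ(N)` is the number of
positive divisors of `N`. -/
theorem stmt_2 (N : ℕ) (hN : 0 < N) :
    Nat.card {L : Submodule ℤ (Fin N → ℤ) //
        (∀ a ∈ L, (fun i : Fin N => a ⟨((i : ℕ) + (N - 1)) % N, Nat.mod_lt _ hN⟩) ∈ L) ∧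
        AddMonoid.IsTorsionFree ((Fin N → ℤ) ⧸ L)} = 2 ^ N.divisors.card := by
  have : NeZero N := ⟨hN.ne'⟩
  have hshift (L : Submodule ℤ (Fin N → ℤ)) :
      (∀ a ∈ L, (fun i : Fin N => a ⟨((i : ℕ) + (N - 1)) % N, Nat.mod_lt _ hN⟩) ∈ L) ↔
        L ∈ Module.End.invtSubmodule (funLeft ℤ ℤ fun i : Fin N => i - 1) := by
    rw [Module.End.mem_invtSubmodule]
    have (a : Fin N → ℤ) : (fun i : Fin N => a ⟨((i : ℕ) + (N - 1)) % N, Nat.mod_lt _ hN⟩) =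
        funLeft ℤ ℤ (fun i : Fin N => i - 1) a :=
      funext fun i => congrArg a (Fin.mk_add_pred_mod_eq_sub_one i)
    simp only [this]
    rfl
  rw [← card_ideals_ge_span_X_pow_sub_one hN]
  exact Nat.card_congr <| (Equiv.subtypeEquivRight fun L => and_congr_left' (hshift L)).trans <|
    (invariantSaturatedSublatticeEquiv _).trans (invtSubmoduleEquivIdeal ℚ N)
end

section
/- Let ℚ̄ be an algebraic closure of ℚ and let W ⊆ ℚ̄* be a finite set of nonzero algebraic numbers that is stable under the action of the absolute Galois group Gal(ℚ̄/ℚ), and suppose that for all distinct π_1, π_2 ∈ W the quotient π_1 π_2^{-1} is not a root of unity. Then for every positive integer N, the Galois group Gal(ℚ̄/ℚ) acts transitively on the set W^N := {π^N : π ∈ W} if and only if it acts transitively on W. -/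
/-- Let `W` be a finite set of nonzero algebraic numbers stable under the
absolute Galois group of `ℚ`, such that no quotient of two distinct elements of `W` is a
root of unity. Then for every positive integer `N`, the Galois group acts transitively on
`W^N = {π^N : π ∈ W}` if and only if it acts transitively on `W`. -/
theorem stmt_7 (W : Set (AlgebraicClosure ℚ)) (hWfin : W.Finite)
    (hW0 : (0 : AlgebraicClosure ℚ) ∉ W)
    (hstable : ∀ σ : AlgebraicClosure ℚ ≃ₐ[ℚ] AlgebraicClosure ℚ, ∀ x ∈ W, σ x ∈ W)
    (hroot : ∀ π₁ ∈ W, ∀ π₂ ∈ W, π₁ ≠ π₂ → ∀ m : ℕ, 0 < m → (π₁ * π₂⁻¹) ^ m ≠ 1)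
    (N : ℕ) (hN : 0 < N) :
    (∀ x ∈ (fun π : AlgebraicClosure ℚ => π ^ N) '' W,
      ∀ y ∈ (fun π : AlgebraicClosure ℚ => π ^ N) '' W,
        ∃ σ : AlgebraicClosure ℚ ≃ₐ[ℚ] AlgebraicClosure ℚ, σ x = y) ↔
    (∀ x ∈ W, ∀ y ∈ W,
        ∃ σ : AlgebraicClosure ℚ ≃ₐ[ℚ] AlgebraicClosure ℚ, σ x = y) := by
  constructor
  · intro h x hx y hy
    obtain ⟨σ, hσ⟩ := h (x ^ N) ⟨x, hx, rfl⟩ (y ^ N) ⟨y, hy, rfl⟩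
    rw [map_pow] at hσ
    refine ⟨σ, ?_⟩
    by_contra hne
    have hy0 : y ≠ 0 := fun h0 => hW0 (h0 ▸ hy)
    have hyN : (y : AlgebraicClosure ℚ) ^ N ≠ 0 := pow_ne_zero _ hy0
    apply hroot (σ x) (hstable σ x hx) y hy hne N hN
    rw [mul_pow, hσ, ← mul_pow, mul_inv_cancel₀ hy0, one_pow]
  · intro h x hx y hy
    obtain ⟨a, ha, rfl⟩ := hx
    obtain ⟨b, hb, rfl⟩ := hy
    obtain ⟨σ, hσ⟩ := h a ha b hb
    exact ⟨σ, by rw [map_pow, hσ]⟩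
end

section
/- Let K be a totally real number field that is Galois over ℚ, let 𝔩_1, …, 𝔩_r be finitely many nonzero prime ideals of the ring of integers O_K, each of odd residue characteristic, and let p be an odd rational prime, coprime to the residue characteristics of the 𝔩_i, that splits completely in K(√−1). Let 𝔭 be a prime of O_K lying over p. Then there exists a totally positive element α ∈ O_K such that: (i) ℚ(α) = K; (ii) for each i, the polynomial X² + α is irreducible in (O_K/𝔩_i)[X]; (iii) X² + α is irreducible in (O_K/𝔭)[X]; and (iv) for every σ ∈ Gal(K/ℚ) with σ ≠ id, the polynomial X² + α splits in (O_K/σ(𝔭))[X]. -/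
/-!
Every prime of `K` above `p` lies below a prime of `K(√−1)` with `e = f = 1`, so it has
`e = f = 1` itself, and its decomposition group, of order `e f`, is trivial: the conjugates `σ 𝔭`
with `σ ≠ 1` all differ from `𝔭`, and from every `𝔩 i` since `p ∉ 𝔩 i`. By the Chinese remainder
theorem take `α` with `-α` a non-square modulo `𝔭` and modulo every `𝔩 i` (finite fields of odd
characteristic have non-squares) and `α ≡ 0` modulo every `σ 𝔭`, `σ ≠ 1`; adding a large multiple
of a positive integer lying in all these primes makes `α` totally positive. If some `σ ≠ 1` fixed
`α`, then `α ∈ σ⁻¹ 𝔭` would give `α = σ α ∈ 𝔭`; so `ℚ(α) = K` by Galois theory.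
-/

open Polynomial NumberField
open scoped Pointwise IntermediateField

theorem IntermediateField.adjoin_simple_eq_top_of_forall_eq_one {F E : Type*} [Field F]
    [Field E] [Algebra F E] [FiniteDimensional F E] [IsGalois F E] (x : E)
    (h : ∀ σ : E ≃ₐ[F] E, σ x = x → σ = 1) : F⟮x⟯ = ⊤ := by
  rw [← IsGalois.fixedField_fixingSubgroup F⟮x⟯, (Subgroup.eq_bot_iff_forall _).2 fun σ hσ ↦
    h σ ((mem_fixingSubgroup_iff _ σ).1 hσ x (mem_adjoin_simple_self F x)), fixedField_bot]

theorem Polynomial.irreducible_X_sq_add_C {F : Type*} [Field F] {a : F}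
    (ha : ¬ IsSquare (-a)) : Irreducible (X ^ 2 + C a) := by
  rw [← sub_neg_eq_add, ← map_neg]
  exact X_pow_sub_C_irreducible_of_prime Nat.prime_two fun b hb ↦ ha ⟨b, by rw [← hb, sq]⟩

namespace Ideal

variable {R S : Type*} [CommRing R] [CommRing S] [Algebra R S]

theorem two_notMem_of_natCast_mem_of_odd {I : Ideal R} (hI : I ≠ ⊤) {p : ℕ} (hp : Odd p)
    (hpI : (p : R) ∈ I) : (2 : R) ∉ I := by
  obtain ⟨k, rfl⟩ := hp
  intro h2
  refine hI ((eq_top_iff_one I).2 ?_)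
  have : (1 : R) = ((2 * k + 1 : ℕ) : R) - 2 * k := by push_cast; ring
  rw [this]
  exact I.sub_mem hpI (I.mul_mem_right _ h2)

theorem exists_not_isSquare_neg_mk (I : Ideal R) [I.IsMaximal] [Finite (R ⧸ I)]
    (h2 : (2 : R) ∉ I) : ∃ y : R, ¬ IsSquare (-Quotient.mk I y) := by
  let := Quotient.field I
  have hchar : ringChar (R ⧸ I) ≠ 2 := fun h ↦ h2 <| Quotient.eq_zero_iff_mem.1 <| by
    simpa [h, map_ofNat] using ringChar.Nat.cast_ringChar (R := R ⧸ I)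
  obtain ⟨c, hc⟩ := FiniteField.exists_nonsquare hchar
  obtain ⟨y, hy⟩ := Quotient.mk_surjective (-c)
  exact ⟨y, by rwa [hy, neg_neg]⟩

theorem stabilizer_eq_bot_of_ramificationIdx_eq_one_of_inertiaDeg_eq_one
    {G : Type*} [Group G] [Finite G] [MulSemiringAction G S] [IsGaloisGroup G R S]
    [IsDomain R] [IsDomain S] [Module.Finite R S] [Module.Flat R S]
    (P : Ideal S) [P.IsPrime] [PerfectField (P.under R).ResidueField]
    (he : P.ramificationIdx R = 1) (hf : P.inertiaDeg R = 1) :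
    MulAction.stabilizer G P = ⊥ := by
  rw [← Subgroup.card_eq_one, card_stabilizer_eq (P.under R) P,
    ramificationIdxIn_eq_ramificationIdx (P.under R) P G,
    inertiaDegIn_eq_inertiaDeg (P.under R) P G, he, hf]

theorem isMaximal_pointwise_smul {G : Type*} [Group G] [MulSemiringAction G R] (g : G)
    (P : Ideal R) [P.IsMaximal] : (g • P).IsMaximal := by
  rw [pointwise_smul_eq_comap]
  exact comap_isMaximal_of_surjective _ (MulSemiringAction.toRingEquiv _ _ _).surjective

theorem natCast_mem_pointwise_smul {G : Type*} [Group G] [MulSemiringAction G R] (g : G)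
    {P : Ideal R} {n : ℕ} (h : (n : R) ∈ P) : (n : R) ∈ g • P := by
  rwa [mem_pointwise_smul_iff_inv_smul_mem, ← MulSemiringAction.toRingHom_apply, map_natCast]

variable {T : Type*} [CommRing T] [Algebra R T] [Algebra S T] [IsScalarTower R S T]

theorem ramificationIdx_eq_one_of_liesOver [Module.Flat S T] (P : Ideal S) (Q : Ideal T)
    [Q.LiesOver P] (hQ : Q.ramificationIdx R = 1) : P.ramificationIdx R = 1 :=
  Nat.eq_one_of_mul_eq_one_right (by rw [← ramificationIdx_tower P Q, hQ])

theorem inertiaDeg_eq_one_of_liesOver (P : Ideal S) (Q : Ideal T) [Q.LiesOver P]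
    (hQ : Q.inertiaDeg R = 1) : P.inertiaDeg R = 1 :=
  Nat.eq_one_of_mul_eq_one_right (by rw [← inertiaDeg_tower P Q, hQ])

end Ideal

namespace NumberField

variable {K : Type*} [Field K] [NumberField K]

theorem exists_forall_pos_add_mul (x : K) {m : ℕ} (hm : 0 < m) :
    ∃ n : ℕ, ∀ ψ : K →+* ℝ, 0 < ψ x + n * m := by
  obtain ⟨B, hB⟩ := Finite.exists_le fun ψ : K →+* ℝ ↦ -ψ x
  obtain ⟨n, hn⟩ := exists_nat_gt B
  refine ⟨n, fun ψ ↦ ?_⟩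
  have : (n : ℝ) ≤ n * m := le_mul_of_one_le_right n.cast_nonneg (by exact_mod_cast hm)
  linarith [hB ψ]

theorem exists_pos_natCast_mem (s : Finset (Ideal (𝓞 K))) (hs : ∀ I ∈ s, I ≠ ⊥) :
    ∃ m : ℕ, 0 < m ∧ ∀ I ∈ s, (m : 𝓞 K) ∈ I := by
  refine ⟨∏ I ∈ s, Ideal.absNorm I, Finset.prod_pos fun I hI ↦ ?_, fun I hI ↦ ?_⟩
  · exact Nat.pos_of_ne_zero <| Ideal.absNorm_ne_zero_iff_mem_nonZeroDivisors.2 <|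
      mem_nonZeroDivisors_of_ne_zero (hs I hI)
  · obtain ⟨k, hk⟩ := Finset.dvd_prod_of_mem Ideal.absNorm hI
    rw [hk, Nat.cast_mul]
    exact I.mul_mem_right _ I.absNorm_mem

theorem exists_totallyPositive_forall_sub_mem (s : Finset (Ideal (𝓞 K)))
    (hs : ∀ I ∈ s, I.IsMaximal) (t : Ideal (𝓞 K) → 𝓞 K) :
    ∃ α : 𝓞 K, (∀ ψ : K →+* ℝ, 0 < ψ α) ∧ ∀ I ∈ s, α - t I ∈ I := by
  have hs₀ (I) (hI : I ∈ s) : I ≠ ⊥ :=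
    have := hs I hI
    Ideal.IsMaximal.ne_bot_of_isIntegral_int I
  obtain ⟨β, hβ⟩ := IsDedekindDomain.exists_forall_sub_mem_ideal (s := s) id (fun _ ↦ 1)
    (fun I hI ↦ Ideal.prime_of_isPrime (hs₀ I hI) (hs I hI).isPrime) (fun _ _ _ _ ↦ id) (t ·)
  obtain ⟨m, hm, hmI⟩ := exists_pos_natCast_mem s hs₀
  obtain ⟨n, hn⟩ := exists_forall_pos_add_mul (β : K) hm
  refine ⟨β + n * m, fun ψ ↦ by simpa using hn ψ, fun I hI ↦ ?_⟩
  rw [add_sub_right_comm]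
  exact I.add_mem (by simpa using hβ I hI) (I.mul_mem_left _ (hmI I hI))

theorem exists_totallyPositive_not_isSquare_neg_and_mem (A B : Finset (Ideal (𝓞 K)))
    (hA : ∀ I ∈ A, I.IsMaximal ∧ (2 : 𝓞 K) ∉ I) (hB : ∀ I ∈ B, I.IsMaximal)
    (hAB : Disjoint A B) :
    ∃ α : 𝓞 K, (∀ ψ : K →+* ℝ, 0 < ψ α) ∧
      (∀ I ∈ A, ¬ IsSquare (-Ideal.Quotient.mk I α)) ∧ ∀ I ∈ B, α ∈ I := by
  classical
  have hy (I) (hI : I ∈ A) : ∃ y : 𝓞 K, ¬ IsSquare (-Ideal.Quotient.mk I y) :=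
    have := (hA I hI).1
    I.exists_not_isSquare_neg_mk (hA I hI).2
  choose y hy using hy
  obtain ⟨α, hpos, hα⟩ := exists_totallyPositive_forall_sub_mem (A ∪ B)
    (fun I hI ↦ (Finset.mem_union.1 hI).elim (fun h ↦ (hA I h).1) (hB I))
    (fun I ↦ if h : I ∈ A then y I h else 0)
  refine ⟨α, hpos, fun I hI ↦ ?_, fun I hI ↦ ?_⟩
  · have := hα I (Finset.mem_union_left _ hI)
    rw [dif_pos hI, ← Ideal.Quotient.mk_eq_mk_iff_sub_mem] at this
    rw [this]
    exact hy I hI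
  · simpa [dif_neg (Finset.disjoint_right.1 hAB hI)] using hα I (Finset.mem_union_right _ hI)

theorem ramificationIdx_eq_one_and_inertiaDeg_eq_one_of_splits {M : Type*} [Field M]
    [NumberField M] [Algebra K M] {p : ℕ} (hp : p.Prime)
    (hsplit : ∀ Q : Ideal (𝓞 M), Q.IsPrime → Q ≠ ⊥ → (p : 𝓞 M) ∈ Q →
      Ideal.ramificationIdx' (Ideal.span {(p : ℤ)}) Q = 1 ∧
      Ideal.inertiaDeg' (Ideal.span {(p : ℤ)}) Q = 1)
    (P : Ideal (𝓞 K)) [P.IsPrime] (hpP : (p : 𝓞 K) ∈ P) :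
    P.ramificationIdx ℤ = 1 ∧ P.inertiaDeg ℤ = 1 := by
  obtain ⟨Q, _, _⟩ := (inferInstance : Nonempty (P.primesOver (𝓞 M)))
  have hpZ : Prime (p : ℤ) := Nat.prime_iff_prime_int.mp hp
  have hpQ : (p : 𝓞 M) ∈ Q := by simpa using (Q.over_def P).le hpP
  have hQ : Q ≠ ⊥ := fun h ↦ hp.ne_zero (by simpa [h] using hpQ)
  have : Q.LiesOver (Ideal.span {(p : ℤ)}) :=
    (Ideal.liesOver_span_iff Ideal.IsPrime.ne_top' hpZ).2 (by simpa using hpQ)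
  have : Q.IsMaximal := Ideal.IsPrime.isMaximal inferInstance hQ
  have : (Ideal.span {(p : ℤ)}).IsMaximal := hpZ.isMaximal_span_singleton
  obtain ⟨he, hf⟩ := hsplit Q inferInstance hQ hpQ
  rw [Ideal.ramificationIdx'_eq_ramificationIdx _ _ (by simpa using hp.ne_zero)] at he
  rw [Ideal.inertiaDeg'_eq_inertiaDeg] at hf
  exact ⟨Ideal.ramificationIdx_eq_one_of_liesOver P Q he,
    Ideal.inertiaDeg_eq_one_of_liesOver P Q hf⟩

theorem map_galRestrict_eq_smul (σ : K ≃ₐ[ℚ] K) (P : Ideal (𝓞 K)) :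
    P.map (galRestrict ℤ ℚ K (𝓞 K) σ : 𝓞 K →+* 𝓞 K) = σ • P := by
  rw [Ideal.pointwise_smul_def]
  congr 1
  ext x
  simp [algebraMap_galRestrict_apply]
  rfl

theorem adjoin_eq_top_of_notMem_of_forall_mem_smul [IsGalois ℚ K] {𝔭 : Ideal (𝓞 K)} {α : 𝓞 K}
    (hα𝔭 : α ∉ 𝔭) (hα : ∀ σ : K ≃ₐ[ℚ] K, σ ≠ 1 → α ∈ σ • 𝔭) : ℚ⟮(α : K)⟯ = ⊤ := by
  refine IntermediateField.adjoin_simple_eq_top_of_forall_eq_one _ fun σ hσx ↦ ?_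
  by_contra hσ
  have hσα : σ • α = α := RingOfIntegers.ext hσx
  exact hα𝔭 (hσα ▸ Ideal.mem_inv_pointwise_smul_iff.1 (hα σ⁻¹ (inv_ne_one.2 hσ)))

end NumberField

theorem stmt_9_general (K : Type) [Field K] [NumberField K] [IsGalois ℚ K]
    (r : ℕ) (𝔩 : Fin r → Ideal (NumberField.RingOfIntegers K))
    (h𝔩prime : ∀ i, (𝔩 i).IsPrime) (h𝔩bot : ∀ i, 𝔩 i ≠ ⊥)
    (h𝔩odd : ∀ i, (2 : NumberField.RingOfIntegers K) ∉ 𝔩 i)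
    (p : ℕ) (hp : p.Prime) (hpodd : Odd p)
    (hpcop : ∀ i, (p : NumberField.RingOfIntegers K) ∉ 𝔩 i)
    (M : Type) [Field M] [NumberField M] [Algebra K M]
    (hsplit : ∀ Q : Ideal (NumberField.RingOfIntegers M), Q.IsPrime → Q ≠ ⊥ →
      (p : NumberField.RingOfIntegers M) ∈ Q →
      Ideal.ramificationIdx'
          (Ideal.span {(p : ℤ)}) Q = 1 ∧
      Ideal.inertiaDeg'
          (Ideal.span {(p : ℤ)}) Q = 1)
    (𝔭 : Ideal (NumberField.RingOfIntegers K)) (h𝔭prime : 𝔭.IsPrime) (h𝔭bot : 𝔭 ≠ ⊥)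
    (h𝔭p : (p : NumberField.RingOfIntegers K) ∈ 𝔭) :
    ∃ α : NumberField.RingOfIntegers K,
      (∀ ψ : K →+* ℝ, 0 < ψ (α : K)) ∧
      IntermediateField.adjoin ℚ {(α : K)} = ⊤ ∧
      (∀ i, Irreducible
        (X ^ 2 + C (Ideal.Quotient.mk (𝔩 i) α) :
          Polynomial (NumberField.RingOfIntegers K ⧸ 𝔩 i))) ∧
      Irreducible
        (X ^ 2 + C (Ideal.Quotient.mk 𝔭 α) :
          Polynomial (NumberField.RingOfIntegers K ⧸ 𝔭)) ∧
      (∀ σ : K ≃ₐ[ℚ] K, σ ≠ 1 →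
        ∃ a b : NumberField.RingOfIntegers K ⧸
            Ideal.map
              ((galRestrict ℤ ℚ K (NumberField.RingOfIntegers K) σ :
                  NumberField.RingOfIntegers K ≃ₐ[ℤ] NumberField.RingOfIntegers K) :
                NumberField.RingOfIntegers K →+* NumberField.RingOfIntegers K) 𝔭,
          (X ^ 2 + C (Ideal.Quotient.mk
              (Ideal.map
                ((galRestrict ℤ ℚ K (NumberField.RingOfIntegers K) σ :
                    NumberField.RingOfIntegers K ≃ₐ[ℤ] NumberField.RingOfIntegers K) :
                  NumberField.RingOfIntegers K →+* NumberField.RingOfIntegers K) 𝔭) α)) =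
            (X - C a) * (X - C b)) := by
  classical
  have h𝔩max i := (h𝔩prime i).isMaximal (h𝔩bot i)
  have h𝔭max := h𝔭prime.isMaximal h𝔭bot
  obtain ⟨he, hf⟩ := ramificationIdx_eq_one_and_inertiaDeg_eq_one_of_splits hp hsplit 𝔭 h𝔭p
  have hstab (σ : K ≃ₐ[ℚ] K) (hσ : σ • 𝔭 = 𝔭) : σ = 1 := by
    simpa [Ideal.stabilizer_eq_bot_of_ramificationIdx_eq_one_of_inertiaDeg_eq_one 𝔭 he hf] using
      MulAction.mem_stabilizer_iff.2 hσ
  obtain ⟨α, hpos, hA, hB⟩ := exists_totallyPositive_not_isSquare_neg_and_mem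
    (insert 𝔭 (Finset.univ.image 𝔩))
    ((Finset.univ.filter (· ≠ (1 : K ≃ₐ[ℚ] K))).image (· • 𝔭))
    (by simpa using ⟨⟨h𝔭max, Ideal.two_notMem_of_natCast_mem_of_odd h𝔭max.ne_top hpodd h𝔭p⟩,
      fun i ↦ ⟨h𝔩max i, h𝔩odd i⟩⟩)
    (by simpa using fun σ _ ↦ Ideal.isMaximal_pointwise_smul σ 𝔭)
    (by
      rw [Finset.disjoint_left]
      simpa using ⟨fun σ hσ h ↦ hσ (hstab σ h),
        fun i σ _ h ↦ hpcop i (h ▸ Ideal.natCast_mem_pointwise_smul σ h𝔭p)⟩)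
  obtain ⟨hA𝔭, hA𝔩⟩ : ¬ IsSquare (-Ideal.Quotient.mk 𝔭 α) ∧
      ∀ i, ¬ IsSquare (-Ideal.Quotient.mk (𝔩 i) α) := by simpa using hA
  have hα_mem (σ : K ≃ₐ[ℚ] K) (hσ : σ ≠ 1) : α ∈ σ • 𝔭 :=
    hB (σ • 𝔭) (by simpa using ⟨σ, hσ, rfl⟩)
  have hα𝔭 : α ∉ 𝔭 := fun h ↦ hA𝔭 (by simp [Ideal.Quotient.eq_zero_iff_mem.2 h])
  refine ⟨α, hpos, adjoin_eq_top_of_notMem_of_forall_mem_smul hα𝔭 hα_mem, fun i ↦ ?_, ?_,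
    fun σ hσ ↦ ⟨0, 0, ?_⟩⟩
  · let := Ideal.Quotient.field (𝔩 i)
    exact irreducible_X_sq_add_C (hA𝔩 i)
  · let := Ideal.Quotient.field 𝔭
    exact irreducible_X_sq_add_C hA𝔭
  · rw [map_galRestrict_eq_smul, Ideal.Quotient.eq_zero_iff_mem.2 (hα_mem σ hσ)]
    simp [sq]

set_option synthInstance.maxHeartbeats 1000000 in
set_option maxHeartbeats 1000000 in
/-- Let `K` be a totally real number field, Galois over `ℚ`; let
`𝔩 0, …, 𝔩 (r-1)` be nonzero primes of `𝓞 K` of odd residue characteristic (i.e. `2 ∉ 𝔩 i`);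
let `p` be an odd rational prime, coprime to the residue characteristics of the `𝔩 i`
(i.e. `p ∉ 𝔩 i`), which splits completely in `K(√−1)` (here `M = K(j)` with `j² = −1`:
every nonzero prime of `𝓞 M` above `p` has ramification index and residue degree `1` over
`ℤ`); and let `𝔭` be a prime of `𝓞 K` over `p`. Then there is a totally positive `α ∈ 𝓞 K`
with: (i) `ℚ(α) = K`; (ii) `X² + α` is irreducible mod each `𝔩 i`; (iii) `X² + α` is
irreducible mod `𝔭`; (iv) for every `σ ≠ id` in `Gal(K/ℚ)`, `X² + α` splits into linear
factors mod `σ(𝔭)`. -/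
theorem stmt_9 (K : Type) [Field K] [NumberField K] [IsGalois ℚ K]
    (hKreal : ∀ ψ : K →+* ℂ, ∀ x, (ψ x).im = 0)
    (r : ℕ) (𝔩 : Fin r → Ideal (NumberField.RingOfIntegers K))
    (h𝔩prime : ∀ i, (𝔩 i).IsPrime) (h𝔩bot : ∀ i, 𝔩 i ≠ ⊥)
    (h𝔩odd : ∀ i, (2 : NumberField.RingOfIntegers K) ∉ 𝔩 i)
    (p : ℕ) (hp : p.Prime) (hpodd : Odd p)
    (hpcop : ∀ i, (p : NumberField.RingOfIntegers K) ∉ 𝔩 i)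
    (M : Type) [Field M] [NumberField M] [Algebra K M]
    (j : M) (hj : j ^ 2 = -1) (hM : IntermediateField.adjoin K {j} = ⊤)
    (hsplit : ∀ Q : Ideal (NumberField.RingOfIntegers M), Q.IsPrime → Q ≠ ⊥ →
      (p : NumberField.RingOfIntegers M) ∈ Q →
      Ideal.ramificationIdx'
          (Ideal.span {(p : ℤ)}) Q = 1 ∧
      Ideal.inertiaDeg'
          (Ideal.span {(p : ℤ)}) Q = 1)
    (𝔭 : Ideal (NumberField.RingOfIntegers K)) (h𝔭prime : 𝔭.IsPrime) (h𝔭bot : 𝔭 ≠ ⊥)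
    (h𝔭p : (p : NumberField.RingOfIntegers K) ∈ 𝔭) :
    ∃ α : NumberField.RingOfIntegers K,
      (∀ ψ : K →+* ℝ, 0 < ψ (α : K)) ∧
      IntermediateField.adjoin ℚ {(α : K)} = ⊤ ∧
      (∀ i, Irreducible
        (X ^ 2 + C (Ideal.Quotient.mk (𝔩 i) α) :
          Polynomial (NumberField.RingOfIntegers K ⧸ 𝔩 i))) ∧
      Irreducible
        (X ^ 2 + C (Ideal.Quotient.mk 𝔭 α) :
          Polynomial (NumberField.RingOfIntegers K ⧸ 𝔭)) ∧
      (∀ σ : K ≃ₐ[ℚ] K, σ ≠ 1 →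
        ∃ a b : NumberField.RingOfIntegers K ⧸
            Ideal.map
              ((galRestrict ℤ ℚ K (NumberField.RingOfIntegers K) σ :
                  NumberField.RingOfIntegers K ≃ₐ[ℤ] NumberField.RingOfIntegers K) :
                NumberField.RingOfIntegers K →+* NumberField.RingOfIntegers K) 𝔭,
          (X ^ 2 + C (Ideal.Quotient.mk
              (Ideal.map
                ((galRestrict ℤ ℚ K (NumberField.RingOfIntegers K) σ :
                    NumberField.RingOfIntegers K ≃ₐ[ℤ] NumberField.RingOfIntegers K) :
                  NumberField.RingOfIntegers K →+* NumberField.RingOfIntegers K) 𝔭) α)) =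
            (X - C a) * (X - C b)) :=
  stmt_9_general K r 𝔩 h𝔩prime h𝔩bot h𝔩odd p hp hpodd hpcop M hsplit 𝔭 h𝔭prime h𝔭bot h𝔭p
end
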